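/- arXiv:math/0506357 — 4 statements merged into one kernel-verified Lean document; each statement's English description precedes it below -/
import Mathlib

section
/- Let λ > 0 and let {f_i}_{i∈I} be a λ-tight frame for a Hilbert space H. Then for every subset J ⊆ I and every f ∈ H: λ·∑_{i∈J} |⟨f, f_i⟩|² − ‖∑_{i∈J} ⟨f, f_i⟩ f_i‖² = λ·∑_{i∈J^c} |⟨f, f_i⟩|² − ‖∑_{i∈J^c} ⟨f, f_i⟩ f_i‖², where J^c = I \ J. -/
/-!
Polarizing the identity `∑ |⟨x, f i⟩|² = λ‖x‖²` shows that a tight frame reconstructs every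
vector: `∑ ⟨x, f i⟩ f i = λ x`, the series converging because a tight frame is a Bessel
sequence. If `A` and `B` are the partial sums over `J` and `Jᶜ`, then `A + B = λ x` and
`⟨A, x⟩ = ∑_{i ∈ J} |⟨x, f i⟩|²`, so `λ ∑_{i ∈ J} |⟨x, f i⟩|² - ‖A‖² = Re ⟨A, λ x - A⟩ = Re ⟨A, B⟩`,
which is symmetric in `A` and `B`.
-/

open scoped InnerProductSpace
open RCLike ComplexConjugate

section

variable {𝕜 H ι : Type*} [RCLike 𝕜] [NormedAddCommGroup H] [InnerProductSpace 𝕜 H]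

local notation "⟪" x ", " y "⟫" => inner 𝕜 x y

theorem re_inner_eq_of_add_eq_smul {A B x : H} {lam : ℝ} (h : A + B = (lam : 𝕜) • x) :
    re ⟪A, B⟫ = lam * re ⟪x, A⟫ - ‖A‖ ^ 2 := by
  rw [eq_sub_of_add_eq' h, inner_sub_right, inner_smul_right, map_sub, re_ofReal_mul,
    inner_re_symm A x, inner_self_eq_norm_sq]

theorem inner_tsum_inner_smul {f : ι → H} {x : H} (hs : Summable fun i => ⟪f i, x⟫ • f i)
    (hn : Summable fun i => ‖⟪f i, x⟫‖ ^ 2) :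
    ⟪x, ∑' i, ⟪f i, x⟫ • f i⟫ = ((∑' i, ‖⟪f i, x⟫‖ ^ 2 : ℝ) : 𝕜) := by
  have h := hs.hasSum.mapL (innerSL 𝕜 x)
  have hterm (i : ι) : ⟪x, ⟪f i, x⟫ • f i⟫ = ((‖⟪f i, x⟫‖ ^ 2 : ℝ) : 𝕜) := by
    rw [inner_smul_right, ← inner_conj_symm x, mul_conj]
    norm_cast
  simp only [innerSL_apply_apply, hterm] at h
  exact h.unique ((hasSum_ofReal 𝕜).mpr hn.hasSum)

variable (𝕜) in
def IsBesselSequence (f : ι → H) (B : ℝ) : Prop :=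
  ∀ (x : H) (s : Finset ι), ∑ i ∈ s, ‖⟪f i, x⟫‖ ^ 2 ≤ B * ‖x‖ ^ 2

variable (𝕜) in
def IsTightFrame (f : ι → H) (lam : ℝ) : Prop :=
  ∀ x, HasSum (fun i => ‖⟪f i, x⟫‖ ^ 2) (lam * ‖x‖ ^ 2)

namespace IsBesselSequence

variable {f : ι → H} {B : ℝ}

theorem norm_sum_smul_sq_le (hf : IsBesselSequence 𝕜 f B) (hB : 0 ≤ B) (c : ι → 𝕜)
    (s : Finset ι) : ‖∑ i ∈ s, c i • f i‖ ^ 2 ≤ B * ∑ i ∈ s, ‖c i‖ ^ 2 := by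
  set y := ∑ i ∈ s, c i • f i
  have hy : ‖y‖ ^ 2 ≤ ∑ i ∈ s, ‖c i‖ * ‖⟪f i, y⟫‖ :=
    calc ‖y‖ ^ 2 = re ⟪y, y⟫ := (inner_self_eq_norm_sq y).symm
      _ ≤ ‖⟪y, y⟫‖ := re_le_norm _
      _ = ‖∑ i ∈ s, conj (c i) * ⟪f i, y⟫‖ := by simp only [y, sum_inner, inner_smul_left]
      _ ≤ ∑ i ∈ s, ‖c i‖ * ‖⟪f i, y⟫‖ := by
        simpa only [norm_mul, norm_conj] using norm_sum_le s fun i => conj (c i) * ⟪f i, y⟫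
  have hS : 0 ≤ ∑ i ∈ s, ‖c i‖ ^ 2 := by positivity
  have h4 : (‖y‖ ^ 2) ^ 2 ≤ (∑ i ∈ s, ‖c i‖ ^ 2) * (B * ‖y‖ ^ 2) :=
    (pow_le_pow_left₀ (by positivity) hy 2).trans <|
      (Finset.sum_mul_sq_le_sq_mul_sq s _ _).trans (mul_le_mul_of_nonneg_left (hf y s) hS)
  nlinarith [mul_nonneg hB hS]

theorem summable_smul [CompleteSpace H] (hf : IsBesselSequence 𝕜 f B) (hB : 0 ≤ B) {c : ι → 𝕜}
    (hc : Summable fun i => ‖c i‖ ^ 2) : Summable fun i => c i • f i := by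
  refine summable_iff_vanishing_norm.mpr fun ε hε => ?_
  obtain ⟨s, hs⟩ := summable_iff_vanishing_norm.mp hc (ε ^ 2 / (B + 1)) (by positivity)
  refine ⟨s, fun t ht => ?_⟩
  have htail : ∑ i ∈ t, ‖c i‖ ^ 2 < ε ^ 2 / (B + 1) :=
    (le_abs_self _).trans_lt (by simpa only [Real.norm_eq_abs] using hs t ht)
  have hsq : ‖∑ i ∈ t, c i • f i‖ ^ 2 < ε ^ 2 :=
    calc ‖∑ i ∈ t, c i • f i‖ ^ 2 ≤ B * ∑ i ∈ t, ‖c i‖ ^ 2 := hf.norm_sum_smul_sq_le hB c t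
      _ ≤ B * (ε ^ 2 / (B + 1)) := mul_le_mul_of_nonneg_left htail.le hB
      _ < ε ^ 2 := by
        rw [mul_div_assoc', div_lt_iff₀ (by linarith)]
        nlinarith [pow_pos hε 2]
  exact (pow_lt_pow_iff_left₀ (norm_nonneg _) hε.le two_ne_zero).mp hsq

end IsBesselSequence

namespace IsTightFrame

variable {f : ι → H} {lam : ℝ}

theorem isBesselSequence (hT : IsTightFrame 𝕜 f lam) : IsBesselSequence 𝕜 f lam :=
  fun x s => sum_le_hasSum s (fun _ _ => by positivity) (hT x)

theorem summable_inner_smul [CompleteSpace H] (hT : IsTightFrame 𝕜 f lam) (hlam : 0 ≤ lam)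
    (x : H) : Summable fun i => ⟪f i, x⟫ • f i :=
  hT.isBesselSequence.summable_smul hlam (hT x).summable

theorem hasSum_inner_mul_inner (hT : IsTightFrame 𝕜 f lam) (x y : H) :
    HasSum (fun i => ⟪x, f i⟫ * ⟪f i, y⟫) ((lam : 𝕜) * ⟪x, y⟫) := by
  have hpol (z : H) : HasSum (fun i => ((‖⟪f i, z⟫‖ : 𝕜)) ^ 2) ((lam : 𝕜) * (‖z‖ : 𝕜) ^ 2) := by
    exact_mod_cast (hasSum_ofReal 𝕜).mpr (hT z)
  have key := (((hpol (x + y)).sub (hpol (x - y))).add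
    (((hpol (x - (I : 𝕜) • y)).sub (hpol (x + (I : 𝕜) • y))).mul_right I)).div_const 4
  rw [inner_eq_sum_norm_sq_div_four x y]
  convert key using 1
  · funext i
    rw [← inner_conj_symm, ← RCLike.inner_apply', inner_eq_sum_norm_sq_div_four (𝕜 := 𝕜)]
    simp only [inner_add_right, inner_sub_right, inner_smul_right, smul_eq_mul]
  · ring

theorem hasSum_inner_smul [CompleteSpace H] (hT : IsTightFrame 𝕜 f lam) (hlam : 0 ≤ lam)
    (x : H) : HasSum (fun i => ⟪f i, x⟫ • f i) ((lam : 𝕜) • x) := by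
  have hs := (hT.summable_inner_smul hlam x).hasSum
  convert hs
  refine ext_inner_left 𝕜 fun y => ?_
  have h := hs.mapL (innerSL 𝕜 y)
  simp only [innerSL_apply_apply, inner_smul_right, mul_comm ⟪f _, x⟫] at h
  rw [inner_smul_right]
  exact (hT.hasSum_inner_mul_inner y x).unique h

end IsTightFrame

end

/-- The identity for λ-tight frames: for a λ-tight frame `{f_i}`, any `J ⊆ I` and any `x`:
`λ∑_{i∈J} |⟨x,f_i⟩|² − ‖∑_{i∈J} ⟨x,f_i⟩ f_i‖² = λ∑_{i∈J^c} |⟨x,f_i⟩|² − ‖∑_{i∈J^c} ⟨x,f_i⟩ f_i‖²`. -/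
theorem stmt_7 {H : Type*} [NormedAddCommGroup H] [InnerProductSpace ℂ H] [CompleteSpace H]
    {ι : Type*} (f : ι → H) (lam : ℝ) (hlam : 0 < lam)
    (hT : ∀ x : H, HasSum (fun i => ‖⟪f i, x⟫_ℂ‖ ^ 2) (lam * ‖x‖ ^ 2))
    (J : Set ι) (x : H) :
    lam * (∑' i : J, ‖⟪f i, x⟫_ℂ‖ ^ 2) - ‖∑' i : J, ⟪f i, x⟫_ℂ • (f i : H)‖ ^ 2 =
    lam * (∑' i : ↥Jᶜ, ‖⟪f i, x⟫_ℂ‖ ^ 2) - ‖∑' i : ↥Jᶜ, ⟪f i, x⟫_ℂ • (f i : H)‖ ^ 2 := by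
  replace hT : IsTightFrame ℂ f lam := hT
  have hs := hT.summable_inner_smul hlam.le x
  have hn := (hT x).summable
  have hsplit : (∑' i : J, ⟪f i, x⟫_ℂ • f i) + ∑' i : ↥Jᶜ, ⟪f i, x⟫_ℂ • f i = (lam : ℂ) • x := by
    rw [(hs.subtype J).tsum_add_tsum_compl (hs.subtype Jᶜ)]
    exact (hT.hasSum_inner_smul hlam.le x).tsum_eq
  have hJ := inner_tsum_inner_smul (f := fun i : J => f i) (hs.subtype J) (hn.subtype J)
  have hJc := inner_tsum_inner_smul (f := fun i : ↥Jᶜ => f i) (hs.subtype Jᶜ) (hn.subtype Jᶜ)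
  calc _ = re ⟪∑' i : J, ⟪f i, x⟫_ℂ • f i, ∑' i : ↥Jᶜ, ⟪f i, x⟫_ℂ • f i⟫_ℂ := by
        rw [re_inner_eq_of_add_eq_smul hsplit, hJ, ofReal_re]
    _ = re ⟪∑' i : ↥Jᶜ, ⟪f i, x⟫_ℂ • f i, ∑' i : J, ⟪f i, x⟫_ℂ • f i⟫_ℂ := inner_re_symm _ _
    _ = _ := by
        rw [re_inner_eq_of_add_eq_smul ((add_comm _ _).trans hsplit), hJc, ofReal_re]
end

section
/- Let {f_i}_{i∈I} be a Parseval frame sequence in a Hilbert space H, i.e., {f_i}_{i∈I} is a Parseval frame for the closed subspace K = closure(span{f_i : i∈I}) of H. Then for every subset J ⊆ I and every f ∈ H: ∑_{i∈J} |⟨f, f_i⟩|² − ‖∑_{i∈J} ⟨f, f_i⟩ f_i‖² = ∑_{i∈J^c} |⟨f, f_i⟩|² − ‖∑_{i∈J^c} ⟨f, f_i⟩ f_i‖², where J^c = I \ J. -/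
open scoped InnerProductSpace

/-!
The quantity `∑_{i∈J} |⟨x, f_i⟩|² − ‖∑_{i∈J} ⟨x, f_i⟩ f_i‖²` depends on `x` only through the
coefficients `⟨x, f_i⟩ = ⟨P x, f_i⟩`, `P` the orthogonal projection onto `K`, so we may take
`x ∈ K`. There the Parseval frame reconstructs `x = a + b` with `a = ∑_{i∈J} ⟨x, f_i⟩ f_i` and
`b = ∑_{i∈Jᶜ} ⟨x, f_i⟩ f_i`, and `∑_{i∈J} |⟨x, f_i⟩|² = Re ⟨a, x⟩`. Hence both sides equal
`Re ⟨a, b⟩`.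
-/

section

variable {𝕜 E ι : Type*} [RCLike 𝕜] [NormedAddCommGroup E] [InnerProductSpace 𝕜 E]

structure IsParsevalFrame (K : Submodule 𝕜 E) (f : ι → E) : Prop where
  mem : ∀ i, f i ∈ K
  hasSum_norm_inner_sq : ∀ g ∈ K, HasSum (fun i => ‖⟪f i, g⟫_𝕜‖ ^ 2) (‖g‖ ^ 2)

theorem hasSum_norm_inner_sq_of_hasSum_smul {f : ι → E} {x w : E}
    (hw : HasSum (fun i => ⟪f i, x⟫_𝕜 • f i) w) :
    HasSum (fun i => ‖⟪f i, x⟫_𝕜‖ ^ 2) (RCLike.re ⟪w, x⟫_𝕜) := by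
  have h := RCLike.hasSum_re 𝕜 ((innerSL 𝕜 x).hasSum hw)
  rw [innerSL_apply_apply, ← inner_re_symm] at h
  refine h.congr_fun fun i => ?_
  rw [innerSL_apply_apply, inner_smul_right, ← inner_conj_symm x (f i), RCLike.mul_conj]
  norm_cast

theorem tsum_norm_inner_sq_sub_norm_tsum_sq_eq_compl [CompleteSpace E] {f : ι → E} {x : E}
    (hx : HasSum (fun i => ⟪f i, x⟫_𝕜 • f i) x) (J : Set ι) :
    (∑' i : J, ‖⟪f i, x⟫_𝕜‖ ^ 2) - ‖∑' i : J, ⟪f i, x⟫_𝕜 • f i‖ ^ 2 =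
    (∑' i : ↥Jᶜ, ‖⟪f i, x⟫_𝕜‖ ^ 2) - ‖∑' i : ↥Jᶜ, ⟪f i, x⟫_𝕜 • f i‖ ^ 2 := by
  have side_eq_re_inner : ∀ s : Set ι, (∑' i : s, ‖⟪f i, x⟫_𝕜‖ ^ 2) - ‖∑' i : s, ⟪f i, x⟫_𝕜 • f i‖ ^ 2 =
      RCLike.re ⟪∑' i : s, ⟪f i, x⟫_𝕜 • f i, ∑' i : ↥sᶜ, ⟪f i, x⟫_𝕜 • f i⟫_𝕜 := by
    intro s
    have hs := hx.summable.subtype (· ∈ s)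
    set a := ∑' i : s, ⟪f i, x⟫_𝕜 • f i
    set b := ∑' i : ↥sᶜ, ⟪f i, x⟫_𝕜 • f i
    have hsplit : a + b = x :=
      (hs.tsum_add_tsum_compl (hx.summable.subtype (· ∈ sᶜ))).trans hx.tsum_eq
    calc (∑' i : s, ‖⟪f i, x⟫_𝕜‖ ^ 2) - ‖a‖ ^ 2 = RCLike.re ⟪a, a + b⟫_𝕜 - ‖a‖ ^ 2 := by
          rw [(hasSum_norm_inner_sq_of_hasSum_smul (f := fun i : s => f i) hs.hasSum).tsum_eq,
            hsplit]
          rfl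
      _ = RCLike.re ⟪a, b⟫_𝕜 := by
          rw [inner_add_right, map_add, inner_self_eq_norm_sq]
          ring
  rw [side_eq_re_inner, side_eq_re_inner, compl_compl, inner_re_symm]

namespace IsParsevalFrame

variable {K : Submodule 𝕜 E} {f : ι → E}

theorem sum_norm_inner_sq_le (hf : IsParsevalFrame K f) {v : E} (hv : v ∈ K) (F : Finset ι) :
    ∑ i ∈ F, ‖⟪f i, v⟫_𝕜‖ ^ 2 ≤ ‖v‖ ^ 2 :=
  sum_le_hasSum F (fun i _ => by positivity) (hf.hasSum_norm_inner_sq v hv)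

theorem norm_sum_smul_sq_le (hf : IsParsevalFrame K f) (c : ι → 𝕜) (F : Finset ι) :
    ‖∑ i ∈ F, c i • f i‖ ^ 2 ≤ ∑ i ∈ F, ‖c i‖ ^ 2 := by
  set v := ∑ i ∈ F, c i • f i
  set S := ∑ i ∈ F, ‖c i‖ ^ 2
  have hvK : v ∈ K := K.sum_mem fun i _ => K.smul_mem _ (hf.mem i)
  have hv : ‖v‖ ^ 2 ≤ ∑ i ∈ F, ‖c i‖ * ‖⟪f i, v⟫_𝕜‖ := by
    rw [← inner_self_eq_norm_sq (𝕜 := 𝕜), sum_inner, map_sum]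
    refine Finset.sum_le_sum fun i _ => ?_
    calc RCLike.re ⟪c i • f i, v⟫_𝕜 ≤ ‖⟪c i • f i, v⟫_𝕜‖ := RCLike.re_le_norm _
      _ = ‖c i‖ * ‖⟪f i, v⟫_𝕜‖ := by rw [inner_smul_left, norm_mul, RCLike.norm_conj]
  have hv4 : ‖v‖ ^ 2 * ‖v‖ ^ 2 ≤ S * ‖v‖ ^ 2 :=
    calc ‖v‖ ^ 2 * ‖v‖ ^ 2 = (‖v‖ ^ 2) ^ 2 := (sq _).symm
      _ ≤ (∑ i ∈ F, ‖c i‖ * ‖⟪f i, v⟫_𝕜‖) ^ 2 := pow_le_pow_left₀ (by positivity) hv 2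
      _ ≤ S * ∑ i ∈ F, ‖⟪f i, v⟫_𝕜‖ ^ 2 := Finset.sum_mul_sq_le_sq_mul_sq F _ _
      _ ≤ S * ‖v‖ ^ 2 :=
        mul_le_mul_of_nonneg_left (hf.sum_norm_inner_sq_le hvK F) (by positivity)
  rcases (sq_nonneg ‖v‖).eq_or_lt with h0 | hpos
  · rw [← h0]
    positivity
  · exact le_of_mul_le_mul_right hv4 hpos

theorem summable_smul [CompleteSpace E] (hf : IsParsevalFrame K f) {c : ι → 𝕜}
    (hc : Summable fun i => ‖c i‖ ^ 2) : Summable fun i => c i • f i := by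
  refine summable_iff_vanishing_norm.mpr fun ε hε => ?_
  obtain ⟨s, hs⟩ := summable_iff_vanishing_norm.mp hc (ε ^ 2) (by positivity)
  refine ⟨s, fun t hts => lt_of_pow_lt_pow_left₀ 2 hε.le ?_⟩
  calc ‖∑ i ∈ t, c i • f i‖ ^ 2 ≤ ∑ i ∈ t, ‖c i‖ ^ 2 := hf.norm_sum_smul_sq_le c t
    _ ≤ ‖∑ i ∈ t, ‖c i‖ ^ 2‖ := Real.le_norm_self _
    _ < ε ^ 2 := hs t hts

theorem norm_sq_le_of_hasSum_smul (hf : IsParsevalFrame K f) {c : ι → 𝕜} {w : E} {S : ℝ}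
    (hw : HasSum (fun i => c i • f i) w) (hc : HasSum (fun i => ‖c i‖ ^ 2) S) : ‖w‖ ^ 2 ≤ S :=
  le_of_tendsto_of_tendsto' (hw.norm.pow 2) hc (hf.norm_sum_smul_sq_le c)

theorem hasSum_inner_smul [CompleteSpace E] (hf : IsParsevalFrame K f) {x : E} (hx : x ∈ K) :
    HasSum (fun i => ⟪f i, x⟫_𝕜 • f i) x := by
  have hc := hf.hasSum_norm_inner_sq x hx
  obtain ⟨w, hw⟩ := hf.summable_smul hc.summable
  have hre : RCLike.re ⟪w, x⟫_𝕜 = ‖x‖ ^ 2 := (hasSum_norm_inner_sq_of_hasSum_smul hw).unique hc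
  have hw_norm : ‖w‖ ^ 2 ≤ ‖x‖ ^ 2 := hf.norm_sq_le_of_hasSum_smul hw hc
  have hdist : ‖w - x‖ ^ 2 ≤ 0 := by
    rw [norm_sub_sq (𝕜 := 𝕜), hre]
    linarith
  have hwx : w = x := by simpa [sub_eq_zero] using le_antisymm hdist (sq_nonneg _)
  rwa [hwx] at hw

theorem inner_starProjection (hf : IsParsevalFrame K f) [K.HasOrthogonalProjection]
    (i : ι) (x : E) : ⟪f i, K.starProjection x⟫_𝕜 = ⟪f i, x⟫_𝕜 := by
  rw [← K.inner_starProjection_left_eq_right, Submodule.starProjection_eq_self_iff.mpr (hf.mem i)]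

end IsParsevalFrame

end

/-- The Parseval Frame Identity for Parseval frame sequences: if `{f_i}` is a Parseval frame
for the closure of its span, then for every `J ⊆ I` and every `x` in the whole space `H`:
`∑_{i∈J} |⟨x,f_i⟩|² − ‖∑_{i∈J} ⟨x,f_i⟩ f_i‖² = ∑_{i∈J^c} |⟨x,f_i⟩|² − ‖∑_{i∈J^c} ⟨x,f_i⟩ f_i‖²`. -/
theorem stmt_8 {H : Type*} [NormedAddCommGroup H] [InnerProductSpace ℂ H] [CompleteSpace H]
    {ι : Type*} (f : ι → H)
    (hP : ∀ g ∈ (Submodule.span ℂ (Set.range f)).topologicalClosure,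
      HasSum (fun i => ‖⟪f i, g⟫_ℂ‖ ^ 2) (‖g‖ ^ 2))
    (J : Set ι) (x : H) :
    (∑' i : J, ‖⟪f i, x⟫_ℂ‖ ^ 2) - ‖∑' i : J, ⟪f i, x⟫_ℂ • (f i : H)‖ ^ 2 =
    (∑' i : ↥Jᶜ, ‖⟪f i, x⟫_ℂ‖ ^ 2) - ‖∑' i : ↥Jᶜ, ⟪f i, x⟫_ℂ • (f i : H)‖ ^ 2 := by
  set K := (Submodule.span ℂ (Set.range f)).topologicalClosure
  have hf : IsParsevalFrame K f :=
    ⟨fun i => Submodule.le_topologicalClosure _ (Submodule.subset_span ⟨i, rfl⟩), hP⟩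
  simp only [← hf.inner_starProjection _ x]
  exact tsum_norm_inner_sq_sub_norm_tsum_sq_eq_compl
    (hf.hasSum_inner_smul (K.starProjection_apply_mem x)) J
end

section
/- Let {f_i}_{i∈I} be a Parseval frame for a Hilbert space H. Then for every subset J ⊆ I and every f ∈ H: ∑_{i∈J} |⟨f, f_i⟩|² + ‖∑_{i∈J^c} ⟨f, f_i⟩ f_i‖² ≥ (3/4)‖f‖², where J^c = I \ J. -/
open scoped InnerProductSpace

/-!
Write `c i = ⟪f i, x⟫`, `a = ∑_{i∈Jᶜ} |c i|²`, `b = ∑_{i∈J} |c i|²`, so that `‖x‖² = a + b`, and let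
`y = ∑_{i∈Jᶜ} c i • f i` (convergent because a Parseval frame is a Bessel family).
Then `⟪x, y⟫ = a`, hence `a ≤ ‖x‖ ‖y‖ ≤ ‖x‖² / 4 + ‖y‖²`, and therefore
`b + ‖y‖² ≥ b + a - (a + b) / 4 ≥ (3/4) ‖x‖²`.
-/

section Bessel

variable {𝕜 : Type*} [RCLike 𝕜] {H : Type*} [NormedAddCommGroup H] [InnerProductSpace 𝕜 H]
  {κ : Type*} {f : κ → H}

theorem norm_sum_smul_sq_le_of_bessel
    (hf : ∀ (x : H) (s : Finset κ), ∑ i ∈ s, ‖⟪f i, x⟫_𝕜‖ ^ 2 ≤ ‖x‖ ^ 2)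
    (c : κ → 𝕜) (s : Finset κ) :
    ‖∑ i ∈ s, c i • f i‖ ^ 2 ≤ ∑ i ∈ s, ‖c i‖ ^ 2 := by
  set S := ∑ i ∈ s, c i • f i
  have hS : ‖S‖ ^ 2 ≤ ∑ i ∈ s, ‖c i‖ * ‖⟪f i, S⟫_𝕜‖ := by
    calc ‖S‖ ^ 2 = ‖⟪S, S⟫_𝕜‖ := by simp [inner_self_eq_norm_sq_to_K]
      _ = ‖∑ i ∈ s, (starRingEnd 𝕜 (c i) * ⟪f i, S⟫_𝕜 : 𝕜)‖ := by
        simp only [S, sum_inner, inner_smul_left]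
      _ ≤ ∑ i ∈ s, ‖c i‖ * ‖⟪f i, S⟫_𝕜‖ := by
        simpa only [norm_mul, RCLike.norm_conj] using
          norm_sum_le s fun i => starRingEnd 𝕜 (c i) * ⟪f i, S⟫_𝕜
  have hCS := Finset.sum_mul_sq_le_sq_mul_sq s (fun i => ‖c i‖) (fun i => ‖⟪f i, S⟫_𝕜‖)
  have hS4 : ‖S‖ ^ 2 * ‖S‖ ^ 2 ≤ (∑ i ∈ s, ‖c i‖ ^ 2) * ‖S‖ ^ 2 := by
    calc ‖S‖ ^ 2 * ‖S‖ ^ 2 = (‖S‖ ^ 2) ^ 2 := by ring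
      _ ≤ (∑ i ∈ s, ‖c i‖ * ‖⟪f i, S⟫_𝕜‖) ^ 2 := by gcongr
      _ ≤ _ := hCS.trans (by gcongr; exact hf S s)
  rcases (sq_nonneg ‖S‖).eq_or_lt with hS0 | hS0
  · rw [← hS0]
    exact Finset.sum_nonneg fun i _ => sq_nonneg _
  · exact le_of_mul_le_mul_right hS4 hS0

theorem summable_smul_of_bessel [CompleteSpace H]
    (hf : ∀ (x : H) (s : Finset κ), ∑ i ∈ s, ‖⟪f i, x⟫_𝕜‖ ^ 2 ≤ ‖x‖ ^ 2)
    {c : κ → 𝕜} (hc : Summable fun i => ‖c i‖ ^ 2) :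
    Summable fun i => c i • f i := by
  rw [summable_iff_vanishing_norm] at hc ⊢
  intro ε hε
  obtain ⟨s, hs⟩ := hc (ε ^ 2) (by positivity)
  refine ⟨s, fun t ht => ?_⟩
  have hsq : ‖∑ i ∈ t, c i • f i‖ ^ 2 < ε ^ 2 :=
    (norm_sum_smul_sq_le_of_bessel hf c t).trans_lt ((le_abs_self _).trans_lt (hs t ht))
  exact lt_of_pow_lt_pow_left₀ 2 hε.le hsq

theorem bessel_subtype_of_parseval
    (hP : ∀ x : H, HasSum (fun i => ‖⟪f i, x⟫_𝕜‖ ^ 2) (‖x‖ ^ 2)) (K : Set κ) (x : H)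
    (s : Finset K) : ∑ i ∈ s, ‖⟪f i, x⟫_𝕜‖ ^ 2 ≤ ‖x‖ ^ 2 := by
  simpa using
    sum_le_hasSum (s.map (Function.Embedding.subtype _)) (fun i _ => sq_nonneg _) (hP x)

theorem hasSum_norm_inner_sq_of_hasSum_inner_smul {x y : H}
    (hy : HasSum (fun i => ⟪f i, x⟫_𝕜 • f i) y) :
    HasSum (fun i => ‖⟪f i, x⟫_𝕜‖ ^ 2) (RCLike.re ⟪x, y⟫_𝕜) := by
  have h := (hy.mapL (innerSL 𝕜 x)).mapL RCLike.reCLM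
  refine h.congr_fun fun i => ?_
  rw [RCLike.reCLM_apply, innerSL_apply_apply, inner_smul_right, ← inner_conj_symm x (f i),
    RCLike.mul_conj, ← RCLike.ofReal_pow, RCLike.ofReal_re]

end Bessel

/-- For a Parseval frame `{f_i}`, any `J ⊆ I` and any `x`:
`∑_{i∈J} |⟨x,f_i⟩|² + ‖∑_{i∈J^c} ⟨x,f_i⟩ f_i‖² ≥ (3/4)‖x‖²`. -/
theorem stmt_9 {H : Type*} [NormedAddCommGroup H] [InnerProductSpace ℂ H] [CompleteSpace H]
    {ι : Type*} (f : ι → H)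
    (hP : ∀ x : H, HasSum (fun i => ‖⟪f i, x⟫_ℂ‖ ^ 2) (‖x‖ ^ 2))
    (J : Set ι) (x : H) :
    (3 / 4 : ℝ) * ‖x‖ ^ 2 ≤
      (∑' i : J, ‖⟪f i, x⟫_ℂ‖ ^ 2) + ‖∑' i : ↥Jᶜ, ⟪f i, x⟫_ℂ • (f i : H)‖ ^ 2 := by
  have hsum := (hP x).summable
  obtain ⟨y, hy⟩ := summable_smul_of_bessel (bessel_subtype_of_parseval hP Jᶜ) (hsum.subtype Jᶜ)
  have hsplit : (∑' i : J, ‖⟪f i, x⟫_ℂ‖ ^ 2) + ∑' i : ↥Jᶜ, ‖⟪f i, x⟫_ℂ‖ ^ 2 = ‖x‖ ^ 2 := by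
    rw [hsum.tsum_subtype_add_tsum_subtype_compl J, (hP x).tsum_eq]
  have hinner : ∑' i : ↥Jᶜ, ‖⟪f i, x⟫_ℂ‖ ^ 2 = RCLike.re ⟪x, y⟫_ℂ :=
    (hasSum_norm_inner_sq_of_hasSum_inner_smul hy).tsum_eq
  have hCS := re_inner_le_norm (𝕜 := ℂ) x y
  rw [hy.tsum_eq]
  nlinarith [sq_nonneg (‖x‖ - 2 * ‖y‖)]
end

section
/- Let {f_i}_{i∈I} be a Parseval frame for a Hilbert space H, let J ⊆ I with J^c = I \ J, let S_J and S_{J^c} be the operators S_J f = ∑_{i∈J} ⟨f, f_i⟩ f_i and S_{J^c} f = ∑_{i∈J^c} ⟨f, f_i⟩ f_i, and let f ∈ H. Then the following six conditions are equivalent: (i) ∑_{i∈J} |⟨f, f_i⟩|² = ‖∑_{i∈J} ⟨f, f_i⟩ f_i‖²; (ii) ∑_{i∈J^c} |⟨f, f_i⟩|² = ‖∑_{i∈J^c} ⟨f, f_i⟩ f_i‖²; (iii) ∑_{i∈J} ⟨f, f_i⟩ f_i is orthogonal to ∑_{i∈J^c} ⟨f, f_i⟩ f_i; (iv) f is orthogonal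 to S_J S_{J^c} f; (v) S_J f = S_J² f; (vi) S_J S_{J^c} f = 0. -/
open scoped InnerProductSpace ComplexOrder

/-!
Write `P = S_J` and `Q = S_{Jᶜ}`. As frame operators of subfamilies both are positive, and
`P + Q = 1` because the frame operator of a Parseval frame is the identity. Hence
`⟪P x, Q x⟫ = ⟪x, P x⟫ - ‖P x‖² = ∑_{i ∈ J} |⟪f i, x⟫|² - ‖P x‖²`, which gives (i) ⇔ (iii), and
symmetrically (ii) ⇔ (iii); self-adjointness gives (iii) ⇔ (iv), and `P Q = P - P²` gives
(v) ⇔ (vi). For (iv) ⇒ (vi), the identity `⟪x, P Q x⟫ = ⟪Q x, P Q x⟫ + ⟪P x, Q P x⟫` splits (iv)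
into two nonnegative terms, so `⟪Q x, P Q x⟫ = ∑_{i ∈ J} |⟪f i, Q x⟫|² = 0`: every coefficient
of `Q x` on `J` vanishes, and `P Q x = 0`.
-/

open ContinuousLinearMap

section Complement

variable {𝕜 E : Type*} [RCLike 𝕜] [NormedAddCommGroup E] [InnerProductSpace 𝕜 E]
  {P Q : E →L[𝕜] E}

theorem apply_apply_eq_sub_of_add_eq_one (hPQ : P + Q = 1) (x : E) :
    P (Q x) = P x - P (P x) := by
  rw [eq_sub_of_add_eq' hPQ, sub_apply, one_apply_eq_self, map_sub]

theorem inner_apply_apply_eq_add_of_add_eq_one (hPQ : P + Q = 1) (x : E) :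
    ⟪x, P (Q x)⟫_𝕜 = ⟪Q x, P (Q x)⟫_𝕜 + ⟪P x, Q (P x)⟫_𝕜 := by
  have hQ : Q = 1 - P := eq_sub_of_add_eq' hPQ
  simp only [hQ, sub_apply, one_apply_eq_self, map_sub, inner_sub_left,
    inner_sub_right]
  ring

theorem inner_apply_apply_eq_of_add_eq_one (hP : P.IsSymmetric) (hPQ : P + Q = 1) (x : E) :
    ⟪P x, Q x⟫_𝕜 = ⟪x, P x⟫_𝕜 - (‖P x‖ ^ 2 : ℝ) := by
  have hPx : ⟪P x, x⟫_𝕜 = ⟪x, P x⟫_𝕜 := hP x x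
  rw [eq_sub_of_add_eq' hPQ, sub_apply, one_apply_eq_self, inner_sub_right, hPx,
    inner_self_eq_norm_sq_to_K, RCLike.ofReal_pow]

end Complement

section FrameOperator

variable {𝕜 H : Type*} [RCLike 𝕜] [NormedAddCommGroup H] [InnerProductSpace 𝕜 H]

def HasFrameOperator {κ : Type*} (g : κ → H) (S : H →L[𝕜] H) : Prop :=
  ∀ z, HasSum (fun i => ⟪g i, z⟫_𝕜 • g i) (S z)

def IsParsevalFrame_s16 {ι : Type*} (f : ι → H) : Prop :=
  ∀ z, HasSum (fun i => ‖⟪f i, z⟫_𝕜‖ ^ 2) (‖z‖ ^ 2)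

namespace HasFrameOperator

variable {κ : Type*} {g : κ → H} {S : H →L[𝕜] H}

theorem hasSum_inner (hS : HasFrameOperator g S) (y z : H) :
    HasSum (fun i => ⟪g i, z⟫_𝕜 * ⟪y, g i⟫_𝕜) ⟪y, S z⟫_𝕜 := by
  simpa only [map_smul, innerSL_apply_apply, smul_eq_mul] using (innerSL 𝕜 y).hasSum (hS z)

theorem hasSum_norm_inner_sq (hS : HasFrameOperator g S) (z : H) :
    HasSum (fun i => ((‖⟪g i, z⟫_𝕜‖ ^ 2 : ℝ) : 𝕜)) ⟪z, S z⟫_𝕜 := by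
  convert hS.hasSum_inner z z using 2 with i
  rw [← inner_conj_symm z, RCLike.mul_conj, RCLike.ofReal_pow]

theorem inner_self_eq_tsum (hS : HasFrameOperator g S) (z : H) :
    ⟪z, S z⟫_𝕜 = ((∑' i, ‖⟪g i, z⟫_𝕜‖ ^ 2 : ℝ) : 𝕜) := by
  rw [RCLike.ofReal_tsum, (hS.hasSum_norm_inner_sq z).tsum_eq]

theorem inner_apply_left (hS : HasFrameOperator g S) (y z : H) :
    ⟪S y, z⟫_𝕜 = ⟪y, S z⟫_𝕜 := by
  have h := (hS.hasSum_inner z y).star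
  simp only [star_mul', RCLike.star_def, inner_conj_symm] at h
  exact h.unique (by simpa only [mul_comm] using hS.hasSum_inner y z)

theorem isSymmetric (hS : HasFrameOperator g S) : S.IsSymmetric := hS.inner_apply_left

theorem isPositive (hS : HasFrameOperator g S) : S.IsPositive := by
  refine (isPositive_iff S).2 ⟨hS.isSymmetric, fun z => ?_⟩
  rw [hS.inner_apply_left, hS.inner_self_eq_tsum]
  exact RCLike.ofReal_nonneg.mpr (tsum_nonneg fun i => sq_nonneg _)

theorem apply_eq_zero_of_inner_self (hS : HasFrameOperator g S) {z : H}
    (hz : ⟪z, S z⟫_𝕜 = 0) : S z = 0 := by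
  have hsq : HasSum (fun i => ‖⟪g i, z⟫_𝕜‖ ^ 2) 0 := by
    have h := hS.hasSum_norm_inner_sq z
    rw [hz, ← RCLike.ofReal_zero] at h
    exact RCLike.hasSum_ofReal 𝕜 |>.mp h
  have hcoef : ∀ i, ⟪g i, z⟫_𝕜 = 0 := fun i => by
    simpa using congrFun ((hasSum_zero_iff_of_nonneg fun i => sq_nonneg _).mp hsq) i
  exact (hS z).unique (by simp [hcoef])

theorem add_compl {ι : Type*} {f : ι → H} {J : Set ι} {SJ SJc : H →L[𝕜] H}
    (hJ : HasFrameOperator (fun i : J => f i) SJ)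
    (hJc : HasFrameOperator (fun i : ↥Jᶜ => f i) SJc) :
    HasFrameOperator f (SJ + SJc) := fun z => (hJ z).add_compl (hJc z)

theorem eq_one_of_isParsevalFrame (hS : HasFrameOperator g S)
    (hg : IsParsevalFrame_s16 (𝕜 := 𝕜) g) : S = 1 := by
  have h := (hS.isSymmetric.sub LinearMap.IsSymmetric.id).inner_map_self_eq_zero.mp fun z => by
    rw [LinearMap.sub_apply, LinearMap.id_apply, inner_sub_left, sub_eq_zero, coe_coe,
      hS.inner_apply_left, hS.inner_self_eq_tsum, (hg z).tsum_eq, inner_self_eq_norm_sq_to_K,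
      RCLike.ofReal_pow]
  ext z
  simpa [sub_eq_zero] using LinearMap.congr_fun h z

theorem apply_apply_eq_zero_of_inner {Q : H →L[𝕜] H} (hS : HasFrameOperator g S)
    (hQ : Q.IsPositive) (hSQ : S + Q = 1) {x : H} (hx : ⟪x, S (Q x)⟫_𝕜 = 0) : S (Q x) = 0 := by
  rw [inner_apply_apply_eq_add_of_add_eq_one hSQ] at hx
  exact hS.apply_eq_zero_of_inner_self ((add_eq_zero_iff_of_nonneg
    (hS.isPositive.inner_nonneg_right _) (hQ.inner_nonneg_right _)).mp hx).1

end HasFrameOperator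

end FrameOperator

theorem stmt_16_general {H : Type*} [NormedAddCommGroup H] [InnerProductSpace ℂ H]
    {ι : Type*} (f : ι → H)
    (hP : ∀ x : H, HasSum (fun i => ‖⟪f i, x⟫_ℂ‖ ^ 2) (‖x‖ ^ 2))
    (J : Set ι) (SJ SJc : H →L[ℂ] H)
    (hSJ : ∀ x : H, HasSum (fun i : J => ⟪f i, x⟫_ℂ • (f i : H)) (SJ x))
    (hSJc : ∀ x : H, HasSum (fun i : ↥Jᶜ => ⟪f i, x⟫_ℂ • (f i : H)) (SJc x))
    (x : H) :
    List.TFAE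
      [ (∑' i : J, ‖⟪f i, x⟫_ℂ‖ ^ 2) = ‖∑' i : J, ⟪f i, x⟫_ℂ • (f i : H)‖ ^ 2,
        (∑' i : ↥Jᶜ, ‖⟪f i, x⟫_ℂ‖ ^ 2) = ‖∑' i : ↥Jᶜ, ⟪f i, x⟫_ℂ • (f i : H)‖ ^ 2,
        ⟪∑' i : J, ⟪f i, x⟫_ℂ • (f i : H), ∑' i : ↥Jᶜ, ⟪f i, x⟫_ℂ • (f i : H)⟫_ℂ = 0,
        ⟪x, SJ (SJc x)⟫_ℂ = 0,
        SJ x = SJ (SJ x),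
        SJ (SJc x) = 0 ] := by
  have hJ : HasFrameOperator (fun i : J => f i) SJ := hSJ
  have hJc : HasFrameOperator (fun i : ↥Jᶜ => f i) SJc := hSJc
  have hsum : SJ + SJc = 1 := (hJ.add_compl hJc).eq_one_of_isParsevalFrame hP
  rw [(hSJ x).tsum_eq, (hSJc x).tsum_eq]
  tfae_have 1 ↔ 3 := by
    rw [inner_apply_apply_eq_of_add_eq_one hJ.isSymmetric hsum, sub_eq_zero,
      hJ.inner_self_eq_tsum, RCLike.ofReal_inj]
  tfae_have 2 ↔ 3 := by
    rw [inner_eq_zero_symm,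
      inner_apply_apply_eq_of_add_eq_one hJc.isSymmetric ((add_comm SJc SJ).trans hsum),
      sub_eq_zero, hJc.inner_self_eq_tsum, RCLike.ofReal_inj]
  tfae_have 3 ↔ 4 := by rw [hJ.inner_apply_left]
  tfae_have 4 → 6 := hJ.apply_apply_eq_zero_of_inner hJc.isPositive hsum
  tfae_have 6 → 4 := fun h => by rw [h, inner_zero_right]
  tfae_have 5 ↔ 6 := by rw [apply_apply_eq_sub_of_add_eq_one hsum, sub_eq_zero, eq_comm]
  tfae_finish

/-- For a Parseval frame `{f_i}`, `J ⊆ I` with partial frame operators `S_J`, `S_{J^c}`,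
and `x ∈ H`, the following are equivalent:
(i) `∑_{i∈J} |⟨x,f_i⟩|² = ‖∑_{i∈J} ⟨x,f_i⟩ f_i‖²`;
(ii) `∑_{i∈J^c} |⟨x,f_i⟩|² = ‖∑_{i∈J^c} ⟨x,f_i⟩ f_i‖²`;
(iii) `∑_{i∈J} ⟨x,f_i⟩ f_i ⊥ ∑_{i∈J^c} ⟨x,f_i⟩ f_i`;
(iv) `x ⊥ S_J S_{J^c} x`;
(v) `S_J x = S_J² x`;
(vi) `S_J S_{J^c} x = 0`. -/
theorem stmt_16 {H : Type*} [NormedAddCommGroup H] [InnerProductSpace ℂ H] [CompleteSpace H]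
    {ι : Type*} (f : ι → H)
    (hP : ∀ x : H, HasSum (fun i => ‖⟪f i, x⟫_ℂ‖ ^ 2) (‖x‖ ^ 2))
    (J : Set ι) (SJ SJc : H →L[ℂ] H)
    (hSJ : ∀ x : H, HasSum (fun i : J => ⟪f i, x⟫_ℂ • (f i : H)) (SJ x))
    (hSJc : ∀ x : H, HasSum (fun i : ↥Jᶜ => ⟪f i, x⟫_ℂ • (f i : H)) (SJc x))
    (x : H) :
    List.TFAE
      [ (∑' i : J, ‖⟪f i, x⟫_ℂ‖ ^ 2) = ‖∑' i : J, ⟪f i, x⟫_ℂ • (f i : H)‖ ^ 2,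
        (∑' i : ↥Jᶜ, ‖⟪f i, x⟫_ℂ‖ ^ 2) = ‖∑' i : ↥Jᶜ, ⟪f i, x⟫_ℂ • (f i : H)‖ ^ 2,
        ⟪∑' i : J, ⟪f i, x⟫_ℂ • (f i : H), ∑' i : ↥Jᶜ, ⟪f i, x⟫_ℂ • (f i : H)⟫_ℂ = 0,
        ⟪x, SJ (SJc x)⟫_ℂ = 0,
        SJ x = SJ (SJ x),
        SJ (SJc x) = 0 ] :=
  stmt_16_general f hP J SJ SJc hSJ hSJc x
end
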